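/- arXiv:1907.07886 — 4 statements merged into one kernel-verified Lean document; each statement's English description precedes it below -/
import Mathlib

section
/- For every m ≥ 1 and d ≥ 1 there exists a full-row-rank matrix A ∈ ℤ^{m×(m+d)} with φ^max(A) = d and σ^asy(A) = m + d; concretely, with distinct primes p_1 < … < p_d, δ := p_1⋯p_d, q_i := δ/p_i, and Ã := (q_1, …, q_d, −δ) ∈ ℤ^{1×(d+1)}, the block matrix A with the (m−1)×(m−1) identity in the upper-left block, Ã in the lower-right block, and zeros elsewhere satisfies: (a) φ^max(A) = d; (b) for k = m + d, the ratio |{b ∈ {−t,…,t}^m : σ(A,b) ≤ k}| / |{b ∈ {−t,…,t}^m : P(A,b) ≠ ∅}| tends to 1 as t → ∞; and (c) for k = m + d − 1 this ratio does not tend to 1. -/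
/-- Ω(k): number of prime factors of `k` counted with multiplicity (`Ω 1 = 0`). -/
noncomputable def bigOmega (k : ℕ) : ℕ := k.primeFactorsList.length

/-- The cone generated by the columns of an integer matrix `W`, as a subset of `ℝ^m`. -/
def coneOf {m r : ℕ} (W : Matrix (Fin m) (Fin r) ℤ) : Set (Fin m → ℝ) :=
  {y | ∃ c : Fin r → ℝ, (∀ j, 0 ≤ c j) ∧ y = ∑ j, c j • fun i => (W i j : ℝ)}

/-- φ^max(W): the maximum of Ω(|det W'|) over invertible m×m submatrices W' of W. -/
noncomputable def phiMax {m r : ℕ} (W : Matrix (Fin m) (Fin r) ℤ) : ℕ :=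
  sSup {t : ℕ | ∃ g : Fin m → Fin r, Function.Injective g ∧
    (W.submatrix id g).det ≠ 0 ∧ t = bigOmega (W.submatrix id g).det.natAbs}

/-- σ(A,b) ∈ ℕ∞: the minimal support size of a nonnegative integer solution of `A x = b`,
`⊤` if no solution exists. -/
noncomputable def sigmaFn {m n : ℕ} (A : Matrix (Fin m) (Fin n) ℤ) (b : Fin m → ℤ) : ℕ∞ :=
  sInf {k : ℕ∞ | ∃ x : Fin n → ℤ, (∀ j, 0 ≤ x j) ∧ A.mulVec x = b ∧
    (Set.ncard {j | x j ≠ 0} : ℕ∞) = k}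

/-- The fraction of right-hand sides `b ∈ {-t,…,t}^m` admitting a feasible solution with
support of size at most `k`, among feasible right-hand sides. -/
noncomputable def sparseRatio {m n : ℕ} (A : Matrix (Fin m) (Fin n) ℤ) (k : ℕ) (t : ℕ) : ℝ :=
  (Set.ncard {b : Fin m → ℤ | (∀ i, |b i| ≤ (t : ℤ)) ∧ sigmaFn A b ≤ (k : ℕ∞)} : ℝ) /
  (Set.ncard {b : Fin m → ℤ | (∀ i, |b i| ≤ (t : ℤ)) ∧
      ∃ x : Fin n → ℤ, (∀ j, 0 ≤ x j) ∧ A.mulVec x = b} : ℝ)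

/-- σ^asy(A): the least `k` such that almost all feasible right-hand sides in `{-t,…,t}^m`
admit a solution with support of size at most `k`. -/
noncomputable def sigmaAsy {m n : ℕ} (A : Matrix (Fin m) (Fin n) ℤ) : ℕ :=
  sInf {k : ℕ | Filter.Tendsto (sparseRatio A k) Filter.atTop (nhds 1)}

/-!
Every column of the matrix is a multiple of a unit vector: `e_i` for `i ≠ r`, `-δ e_r`, and
`q_k e_r`. Hence a nonsingular `m × m` minor is, up to sign, a single entry of row `r`, which
divides `δ = p_1 ⋯ p_d` (so `Ω ≤ d`), and the minor on the first `m` columns is `-δ`.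

Since the `q_k` are coprime, every `b` with `b_i ≥ 0` off row `r` is feasible (Bézout, shifted by
multiples of `p_k` to make it nonnegative), and a feasible `b` never needs more than all `m + d`
columns. If moreover `b_i > 0` off row `r` and `b_r < 0` is coprime to `δ`, a nonnegative
solution uses every column: the `e_i` are forced, `-δ e_r` is needed because `b_r < 0`, and
dropping `q_k e_r` would make `p_k` divide `b_r`. These `b` form at least a `(3δ)^{-m}` fraction
of the feasible `b` in every box `{-t, …, t}^m`, so the ratio for `m + d - 1` stays below `1`.
-/

open Matrix Filter Topology

lemma bigOmega_le_of_dvd {a b : ℕ} (h : a ∣ b) (hb : b ≠ 0) : bigOmega a ≤ bigOmega b :=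
  (Nat.primeFactorsList_sublist_of_dvd h hb).length_le

lemma bigOmega_prod_primes {ι : Type*} [Fintype ι] (p : ι → ℕ) (hp : ∀ i, (p i).Prime) :
    bigOmega (∏ i, p i) = Fintype.card ι := by
  have h0 : (Finset.univ.val.map p).prod ≠ 0 :=
    Multiset.prod_ne_zero fun h => by
      obtain ⟨i, -, hi⟩ := Multiset.mem_map.mp h
      exact (hp i).ne_zero hi
  rw [bigOmega, ← ArithmeticFunction.cardFactors_apply, Finset.prod_eq_multiset_prod,
    ArithmeticFunction.cardFactors_multiset_prod h0, Multiset.map_map]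
  simp [ArithmeticFunction.cardFactors_apply_prime (hp _)]

lemma finite_setOf_forall_abs_le {m : ℕ} (t : ℕ) : {b : Fin m → ℤ | ∀ i, |b i| ≤ t}.Finite :=
  (Set.Finite.pi fun _ => Set.finite_Icc (-(t : ℤ)) t).subset
    fun _ hb i _ => abs_le.mp (hb i)

section SupportFunction

variable {m n : ℕ} (A : Matrix (Fin m) (Fin n) ℤ) {b : Fin m → ℤ}

lemma sigmaFn_le_of_nonneg_solution {x : Fin n → ℤ} (hx : ∀ j, 0 ≤ x j) (hAx : A *ᵥ x = b) :
    sigmaFn A b ≤ n := by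
  have hmem : (Set.ncard {j | x j ≠ 0} : ℕ∞) ∈ {k : ℕ∞ | ∃ x : Fin n → ℤ, (∀ j, 0 ≤ x j) ∧
      A *ᵥ x = b ∧ (Set.ncard {j | x j ≠ 0} : ℕ∞) = k} := ⟨x, hx, hAx, rfl⟩
  refine (sInf_le hmem).trans ?_
  exact_mod_cast (Set.ncard_le_ncard (Set.subset_univ _)).trans (by simp)

variable {A}

lemma exists_nonneg_solution_of_sigmaFn_le {k : ℕ} (h : sigmaFn A b ≤ k) :
    ∃ x : Fin n → ℤ, (∀ j, 0 ≤ x j) ∧ A *ᵥ x = b := by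
  by_contra! hno
  have : sigmaFn A b = ⊤ := by
    rw [sigmaFn, sInf_eq_top]
    rintro _ ⟨x, hx, hAx, -⟩
    exact absurd hAx (hno x hx)
  exact ENat.natCast_ne_top k (top_le_iff.mp (this ▸ h))

lemma card_le_sigmaFn (hfull : ∀ x : Fin n → ℤ, (∀ j, 0 ≤ x j) → A *ᵥ x = b → ∀ j, x j ≠ 0) :
    n ≤ sigmaFn A b := by
  refine le_sInf ?_
  rintro _ ⟨x, hx, hAx, rfl⟩
  simp [hfull x hx hAx]

variable (A)

lemma sparseRatio_card_eq_one (t : ℕ) : sparseRatio A n t = 1 := by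
  have hsets : {b : Fin m → ℤ | (∀ i, |b i| ≤ (t : ℤ)) ∧ sigmaFn A b ≤ (n : ℕ∞)} =
      {b | (∀ i, |b i| ≤ (t : ℤ)) ∧ ∃ x : Fin n → ℤ, (∀ j, 0 ≤ x j) ∧ A *ᵥ x = b} := by
    ext b
    exact and_congr_right fun _ =>
      ⟨exists_nonneg_solution_of_sigmaFn_le, fun ⟨_, hx, hAx⟩ =>
        sigmaFn_le_of_nonneg_solution A hx hAx⟩
  have hzero : (0 : Fin m → ℤ) ∈
      {b | (∀ i, |b i| ≤ (t : ℤ)) ∧ ∃ x : Fin n → ℤ, (∀ j, 0 ≤ x j) ∧ A *ᵥ x = b} :=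
    ⟨by simp, 0, fun _ => le_rfl, mulVec_zero A⟩
  rw [sparseRatio, hsets, div_self]
  exact_mod_cast
    ((Set.ncard_pos ((finite_setOf_forall_abs_le t).subset fun _ hb => hb.1)).mpr ⟨_, hzero⟩).ne'

lemma sigmaAsy_eq_of_tendsto {k : ℕ} (hk : Tendsto (sparseRatio A k) atTop (𝓝 1))
    (hlt : ∀ k' < k, ¬ Tendsto (sparseRatio A k') atTop (𝓝 1)) : sigmaAsy A = k :=
  le_antisymm (Nat.sInf_le hk) (le_csInf ⟨k, hk⟩ fun _ hk' => not_lt.mp fun h => hlt _ h hk')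

end SupportFunction

lemma not_tendsto_one_of_eventually_le {f : ℕ → ℝ} {c : ℝ} (hc : c < 1)
    (hf : ∀ᶠ t in atTop, f t ≤ c) : ¬ Tendsto f atTop (𝓝 1) := fun hT =>
  let ⟨_, hle, hlt⟩ := (hf.and (hT.eventually_const_lt hc)).exists
  hle.not_gt hlt

lemma ncard_div_ncard_le_one_sub {α : Type*} {N B F U : Set α} {C : ℕ} (hU : U.Finite)
    (hNF : N ⊆ F) (hBF : B ⊆ F) (hFU : F ⊆ U) (hNB : Disjoint N B) (hF : F.Nonempty)
    (hUB : U.ncard ≤ C * B.ncard) :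
    (N.ncard : ℝ) / F.ncard ≤ 1 - 1 / C := by
  have hFfin := hU.subset hFU
  have hNBF : N.ncard + B.ncard ≤ F.ncard := by
    rw [← Set.ncard_union_eq hNB (hFfin.subset hNF) (hFfin.subset hBF)]
    exact Set.ncard_le_ncard (Set.union_subset hNF hBF) hFfin
  have hFC : F.ncard ≤ C * B.ncard := (Set.ncard_le_ncard hFU hU).trans hUB
  have hF0 : 0 < F.ncard := (Set.ncard_pos hFfin).mpr hF
  have hC0 : (0 : ℝ) < C := mod_cast Nat.pos_of_mul_pos_right (hF0.trans_le hFC)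
  have hF0' : (0 : ℝ) < F.ncard := mod_cast hF0
  calc (N.ncard : ℝ) / F.ncard ≤ (F.ncard - B.ncard) / F.ncard := by
        gcongr
        linarith [(mod_cast hNBF : (N.ncard : ℝ) + B.ncard ≤ F.ncard)]
    _ = 1 - B.ncard / F.ncard := by rw [sub_div, div_self hF0'.ne']
    _ ≤ 1 - 1 / C := by
        rw [sub_le_sub_iff_left, div_le_div_iff₀ hC0 hF0']
        linarith [(mod_cast hFC : (F.ncard : ℝ) ≤ C * B.ncard)]

lemma card_piFinset_le_pow_mul {ι α : Type*} [Fintype ι] [DecidableEq ι] (U B : ι → Finset α)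
    (c : ℕ) (h : ∀ i, (U i).card ≤ c * (B i).card) :
    (Fintype.piFinset U).card ≤ c ^ Fintype.card ι * (Fintype.piFinset B).card := by
  rw [Fintype.card_piFinset, Fintype.card_piFinset, ← Finset.card_univ, ← Finset.prod_const,
    ← Finset.prod_mul_distrib]
  exact Finset.prod_le_prod (fun _ _ => Nat.zero_le _) fun i _ => h i

section ColSingles

variable {ι κ R : Type*} [CommRing R] [DecidableEq ι]

def colSingles (f : κ → ι) (a : κ → R) : Matrix ι κ R :=
  of fun i j => if i = f j then a j else 0

lemma colSingles_submatrix (f : κ → ι) (a : κ → R) {ν : Type*} (g : ν → κ) :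
    (colSingles f a).submatrix id g = colSingles (f ∘ g) (a ∘ g) := rfl

variable [Fintype ι]

lemma det_colSingles (f : ι → ι) (a : ι → R) :
    (colSingles f a).det = (∏ j, a j) * ((1 : Matrix ι ι R).submatrix id f).det := by
  rw [← det_mul_row]
  congr with i j
  simp [colSingles, one_apply]

lemma det_colSingles_of_not_injective {f : ι → ι} (hf : ¬ f.Injective) (a : ι → R) :
    (colSingles f a).det = 0 := by
  obtain ⟨j, j', hfj, hjj'⟩ := Function.not_injective_iff.mp hf
  rw [det_colSingles, mul_eq_zero_of_right]
  exact det_zero_of_column_eq hjj' fun i => by rw [submatrix_apply, submatrix_apply, hfj]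

lemma det_colSingles_perm (σ : Equiv.Perm ι) (a : ι → R) :
    (colSingles σ a).det = Equiv.Perm.sign σ * ∏ j, a j := by
  rw [det_colSingles, det_permute', det_one, mul_one, mul_comm]

end ColSingles

namespace CofactorExample

variable {d : ℕ} (p : Fin d → ℕ)

def delta : ℕ := ∏ k, p k

def cofactor (k : Fin d) : ℕ := ∏ j ∈ {k}ᶜ, p j

lemma prime_mul_cofactor (k : Fin d) : p k * cofactor p k = delta p :=
  (Fintype.prod_eq_mul_prod_compl k p).symm

lemma dvd_delta (k : Fin d) : p k ∣ delta p := ⟨_, (prime_mul_cofactor p k).symm⟩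

lemma cofactor_dvd_delta (k : Fin d) : cofactor p k ∣ delta p :=
  Dvd.intro_left _ (prime_mul_cofactor p k)

lemma dvd_cofactor {j k : Fin d} (hjk : j ≠ k) : p j ∣ cofactor p k :=
  Finset.dvd_prod_of_mem p (by simpa using hjk)

variable {p}

lemma delta_pos (hp : ∀ k, (p k).Prime) : 0 < delta p :=
  Finset.prod_pos fun k _ => (hp k).pos

lemma exists_sum_mul_cofactor_eq_one [NeZero d] (hp : ∀ k, (p k).Prime)
    (hinj : Function.Injective p) : ∃ u : Fin d → ℤ, ∑ k, u k * cofactor p k = 1 := by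
  have hcop : Pairwise (Function.onFun IsCoprime fun k => (p k : ℤ)) := fun j k hjk =>
    Nat.isCoprime_iff_coprime.mpr ((Nat.coprime_primes (hp j) (hp k)).mpr (hinj.ne hjk))
  simpa [cofactor] using exists_sum_eq_one_iff_pairwise_coprime'.mpr hcop

lemma exists_nonneg_sum_mul_cofactor_sub [NeZero d] (hp : ∀ k, (p k).Prime)
    (hinj : Function.Injective p) (c : ℤ) :
    ∃ y : Fin d → ℤ, ∃ z : ℤ, (∀ k, 0 ≤ y k) ∧ 0 ≤ z ∧
      ∑ k, (cofactor p k : ℤ) * y k - delta p * z = c := by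
  obtain ⟨u, hu⟩ := exists_sum_mul_cofactor_eq_one hp hinj
  -- shift the Bézout solution `k ↦ u k * c` by multiples of `p k`, absorbed by `z`
  refine ⟨fun k => u k * c + p k * |u k * c|, ∑ k, |u k * c|, fun k => ?_,
    Finset.sum_nonneg fun _ _ => abs_nonneg _, ?_⟩
  · have : (1 : ℤ) ≤ p k := mod_cast (hp k).one_lt.le
    nlinarith [neg_abs_le (u k * c), abs_nonneg (u k * c)]
  · have hδ (k : Fin d) : (cofactor p k : ℤ) * p k = delta p := by
      rw [mul_comm]; exact_mod_cast prime_mul_cofactor p k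
    simp only [mul_add, ← mul_assoc, hδ, Finset.sum_add_distrib, ← Finset.mul_sum]
    rw [add_sub_cancel_right, ← Finset.sum_mul]
    simp_rw [mul_comm (cofactor p _ : ℤ)]
    rw [hu, one_mul]

variable {m : ℕ} (p) (r : Fin m)

def colRow : Fin (m + d) → Fin m := Fin.addCases id fun _ => r

def colEntry : Fin (m + d) → ℤ :=
  Fin.addCases (Pi.mulSingle r (-(delta p : ℤ))) fun k => cofactor p k

/-- Up to a permutation of its columns, this is the block matrix `diag(I_{m-1}, (q_1, …, q_d, -δ))`,
with the block `(q_1, …, q_d, -δ)` in row `r`. -/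
def cofactorMatrix : Matrix (Fin m) (Fin (m + d)) ℤ :=
  colSingles (colRow (d := d) r) (colEntry p r)

lemma cofactorMatrix_mulVec_apply (x : Fin (m + d) → ℤ) (i : Fin m) :
    (cofactorMatrix p r *ᵥ x) i =
      (Pi.mulSingle r (-(delta p : ℤ)) : Fin m → ℤ) i * x (Fin.castAdd d i) +
        if i = r then ∑ k, (cofactor p k : ℤ) * x (Fin.natAdd m k) else 0 := by
  simp [cofactorMatrix, colSingles, mulVec, dotProduct, Fin.sum_univ_add, colRow, colEntry]

variable {p r}

lemma cofactorMatrix_mulVec_apply_of_ne (x : Fin (m + d) → ℤ) {i : Fin m} (hi : i ≠ r) :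
    (cofactorMatrix p r *ᵥ x) i = x (Fin.castAdd d i) := by
  simp [cofactorMatrix_mulVec_apply, hi]

lemma cofactorMatrix_mulVec_apply_self (x : Fin (m + d) → ℤ) :
    (cofactorMatrix p r *ᵥ x) r =
      ∑ k, (cofactor p k : ℤ) * x (Fin.natAdd m k) - delta p * x (Fin.castAdd d r) := by
  simp [cofactorMatrix_mulVec_apply]
  ring

lemma cofactorMatrix_mulVec_append {b : Fin m → ℤ} {y : Fin d → ℤ} {z : ℤ}
    (h : ∑ k, (cofactor p k : ℤ) * y k - delta p * z = b r) :
    cofactorMatrix p r *ᵥ Fin.append (Function.update b r z) y = b := by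
  ext i
  rcases eq_or_ne i r with rfl | hi
  · simp [cofactorMatrix_mulVec_apply_self, h]
  · simp [cofactorMatrix_mulVec_apply_of_ne _ hi, hi]

lemma exists_nonneg_solution_cofactorMatrix [NeZero d] (hp : ∀ k, (p k).Prime)
    (hinj : Function.Injective p) {b : Fin m → ℤ} (hb : ∀ i ≠ r, 0 ≤ b i) :
    ∃ x : Fin (m + d) → ℤ, (∀ j, 0 ≤ x j) ∧ cofactorMatrix p r *ᵥ x = b := by
  obtain ⟨y, z, hy, hz, h⟩ := exists_nonneg_sum_mul_cofactor_sub hp hinj (b r)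
  refine ⟨_, fun j => ?_, cofactorMatrix_mulVec_append h⟩
  induction j using Fin.addCases with
  | left i =>
    rcases eq_or_ne i r with rfl | hi
    · simpa
    · simpa [hi] using hb i hi
  | right k => simpa using hy k

lemma rank_cofactorMatrix [NeZero d] (hp : ∀ k, (p k).Prime) (hinj : Function.Injective p) :
    (cofactorMatrix p r).rank = m := by
  have hsurj : Function.Surjective (cofactorMatrix p r).mulVecLin := fun b =>
    let ⟨_, _, _, _, h⟩ := exists_nonneg_sum_mul_cofactor_sub hp hinj (b r)
    ⟨_, cofactorMatrix_mulVec_append h⟩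
  rw [Matrix.rank, LinearMap.range_eq_top.mpr hsurj, finrank_top, Module.finrank_fin_fun]

lemma nonneg_of_cofactorMatrix_mulVec {x : Fin (m + d) → ℤ} (hx : ∀ j, 0 ≤ x j) {i : Fin m}
    (hi : i ≠ r) : 0 ≤ (cofactorMatrix p r *ᵥ x) i := by
  rw [cofactorMatrix_mulVec_apply_of_ne x hi]
  exact hx _

lemma nonneg_solution_ne_zero (hp : ∀ k, (p k).Prime) {b : Fin m → ℤ} (hb : ∀ i ≠ r, b i ≠ 0)
    (hbr : b r < 0) (hcop : IsCoprime (b r) (delta p)) {x : Fin (m + d) → ℤ}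
    (hx : ∀ j, 0 ≤ x j) (hAx : cofactorMatrix p r *ᵥ x = b) (j : Fin (m + d)) : x j ≠ 0 := by
  have hlast := cofactorMatrix_mulVec_apply_self (p := p) (r := r) x
  rw [hAx] at hlast
  intro h0
  induction j using Fin.addCases with
  | left i =>
    rcases eq_or_ne i r with rfl | hi
    · have : 0 ≤ ∑ k, (cofactor p k : ℤ) * x (Fin.natAdd m k) :=
        Finset.sum_nonneg fun k _ => mul_nonneg (by positivity) (hx _)
      rw [h0, mul_zero, sub_zero] at hlast
      linarith
    · exact hb i hi (by rw [← hAx, cofactorMatrix_mulVec_apply_of_ne x hi, h0])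
  | right k =>
    have hk : (p k : ℤ) ∣ delta p := mod_cast dvd_delta p k
    have hdvd : (p k : ℤ) ∣ b r := by
      rw [hlast]
      refine dvd_sub (Finset.dvd_sum fun j _ => ?_) (dvd_mul_of_dvd_left hk _)
      rcases eq_or_ne j k with rfl | hjk
      · simp [h0]
      · exact dvd_mul_of_dvd_left (mod_cast dvd_cofactor p hjk.symm) _
    exact (Nat.prime_iff_prime_int.mp (hp k)).not_isUnit (hcop.isUnit_of_dvd' hdvd hk)

variable (p r)

lemma colEntry_dvd_delta (j : Fin (m + d)) : colEntry p r j ∣ delta p := by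
  induction j using Fin.addCases with
  | left i =>
    rcases eq_or_ne i r with rfl | hi
    · simp [colEntry]
    · simp [colEntry, hi]
  | right k => simpa [colEntry] using Int.natCast_dvd_natCast.mpr (cofactor_dvd_delta p k)

variable {p r}

lemma colEntry_eq_one {j : Fin (m + d)} (hj : colRow r j ≠ r) : colEntry p r j = 1 := by
  induction j using Fin.addCases with
  | left i => simp_all [colRow, colEntry]
  | right k => simp [colRow] at hj

lemma det_submatrix_cofactorMatrix_dvd {g : Fin m → Fin (m + d)}
    (hdet : ((cofactorMatrix p r).submatrix id g).det ≠ 0) :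
    ((cofactorMatrix p r).submatrix id g).det ∣ delta p := by
  rw [cofactorMatrix, colSingles_submatrix] at hdet ⊢
  have hinj : (colRow r ∘ g).Injective := by
    by_contra h
    exact hdet (det_colSingles_of_not_injective h _)
  set σ := Equiv.ofBijective _ hinj.bijective_of_finite
  -- the minor is `± ∏ l, colEntry p r (g l)`, and every factor off row `r` is `1`
  have hσ : colRow r ∘ g = σ := rfl
  rw [hσ, det_colSingles_perm, Int.cast_id, (Units.isUnit _).mul_left_dvd,
    Finset.prod_eq_single (σ.symm r) (fun l _ hl => show (colEntry p r ∘ g) l = 1 from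
      colEntry_eq_one fun h => hl (σ.eq_symm_apply.mpr h)) (by simp)]
  exact colEntry_dvd_delta p r _

lemma det_submatrix_castAdd_cofactorMatrix :
    ((cofactorMatrix p r).submatrix id (Fin.castAdd d)).det = -delta p := by
  have : colRow r ∘ Fin.castAdd d = ⇑(Equiv.refl (Fin m)) := funext fun i => by simp [colRow]
  rw [cofactorMatrix, colSingles_submatrix, this, det_colSingles_perm]
  simp [colEntry]

lemma phiMax_cofactorMatrix (hp : ∀ k, (p k).Prime) : phiMax (cofactorMatrix p r) = d := by
  have hδ : bigOmega (delta p) = d := (bigOmega_prod_primes p hp).trans (Fintype.card_fin d)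
  refine IsGreatest.csSup_eq ⟨⟨Fin.castAdd d, Fin.castAdd_injective m d, ?_, ?_⟩, ?_⟩
  · simpa [det_submatrix_castAdd_cofactorMatrix] using (delta_pos hp).ne'
  · rw [det_submatrix_castAdd_cofactorMatrix, Int.natAbs_neg, Int.natAbs_natCast, hδ]
  · rintro _ ⟨g, -, hdet, rfl⟩
    refine (bigOmega_le_of_dvd ?_ (delta_pos hp).ne').trans_eq hδ
    simpa using Int.natAbs_dvd_natAbs.mpr (det_submatrix_cofactorMatrix_dvd hdet)

variable (p r)

noncomputable def outerBox (t : ℕ) (i : Fin m) : Finset ℤ :=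
  if i = r then Finset.Icc (-t) t else Finset.Icc 0 t

noncomputable def fullSupportBox (t : ℕ) (i : Fin m) : Finset ℤ :=
  if i = r then (Finset.range ((t - 1) / delta p + 1)).image fun κ : ℕ => -1 - delta p * κ
  else Finset.Icc 1 t

variable {p r}

lemma feasible_subset_outerBox (t : ℕ) :
    {b : Fin m → ℤ | (∀ i, |b i| ≤ (t : ℤ)) ∧
      ∃ x : Fin (m + d) → ℤ, (∀ j, 0 ≤ x j) ∧ cofactorMatrix p r *ᵥ x = b} ⊆
      Fintype.piFinset (outerBox r t) := by
  rintro b ⟨hbox, x, hx, rfl⟩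
  rw [Finset.mem_coe, Fintype.mem_piFinset]
  intro i
  have := abs_le.mp (hbox i)
  rcases eq_or_ne i r with rfl | hi
  · simpa [outerBox] using this
  · simpa [outerBox, hi, this.2] using nonneg_of_cofactorMatrix_mulVec hx hi

lemma exists_of_mem_fullSupportBox_self {t : ℕ} {c : ℤ} (hc : c ∈ fullSupportBox p r t r) :
    ∃ κ : ℕ, delta p * κ ≤ t - 1 ∧ c = -1 - delta p * κ := by
  simp only [fullSupportBox, if_pos, Finset.mem_image, Finset.mem_range] at hc
  obtain ⟨κ, hκ, rfl⟩ := hc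
  exact ⟨κ, (Nat.mul_le_mul_left _ (Nat.lt_succ_iff.mp hκ)).trans (Nat.mul_div_le _ _), rfl⟩

lemma mem_fullSupportBox_of_ne {t : ℕ} {c : ℤ} {i : Fin m} (hi : i ≠ r)
    (hc : c ∈ fullSupportBox p r t i) : 1 ≤ c ∧ c ≤ t := by
  simpa [fullSupportBox, hi] using hc

lemma fullSupportBox_subset_feasible [NeZero d] (hp : ∀ k, (p k).Prime)
    (hinj : Function.Injective p) {t : ℕ} (ht : 1 ≤ t) :
    ↑(Fintype.piFinset (fullSupportBox p r t)) ⊆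
      {b : Fin m → ℤ | (∀ i, |b i| ≤ (t : ℤ)) ∧
        ∃ x : Fin (m + d) → ℤ, (∀ j, 0 ≤ x j) ∧ cofactorMatrix p r *ᵥ x = b} := by
  intro b hb
  rw [Finset.mem_coe, Fintype.mem_piFinset] at hb
  refine ⟨fun i => ?_, exists_nonneg_solution_cofactorMatrix hp hinj fun i hi =>
    zero_le_one.trans (mem_fullSupportBox_of_ne hi (hb i)).1⟩
  rcases eq_or_ne i r with rfl | hi
  · obtain ⟨κ, hκ, hbκ⟩ := exists_of_mem_fullSupportBox_self (hb i)
    zify [ht] at hκ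
    have : (0 : ℤ) ≤ delta p * κ := by positivity
    rw [hbκ, abs_le]
    constructor <;> linarith
  · obtain ⟨h1, h2⟩ := mem_fullSupportBox_of_ne hi (hb i)
    exact abs_le.mpr ⟨by linarith, h2⟩

lemma le_sigmaFn_of_mem_fullSupportBox (hp : ∀ k, (p k).Prime) {t : ℕ} {b : Fin m → ℤ}
    (hb : b ∈ Fintype.piFinset (fullSupportBox p r t)) :
    ((m + d : ℕ) : ℕ∞) ≤ sigmaFn (cofactorMatrix p r) b := by
  rw [Fintype.mem_piFinset] at hb
  obtain ⟨κ, -, hbκ⟩ := exists_of_mem_fullSupportBox_self (hb r)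
  refine card_le_sigmaFn fun x hx hAx => nonneg_solution_ne_zero hp
    (fun i hi => (zero_lt_one.trans_le (mem_fullSupportBox_of_ne hi (hb i)).1).ne') ?_ ?_ hx hAx
  · have : (0 : ℤ) ≤ delta p * κ := by positivity
    linarith
  · exact ⟨-1, -κ, by rw [hbκ]; ring⟩

lemma card_outerBox_le (hp : ∀ k, (p k).Prime) {t : ℕ} (ht : 1 ≤ t) :
    (Fintype.piFinset (outerBox r t)).card ≤
      (3 * delta p) ^ m * (Fintype.piFinset (fullSupportBox p r t)).card := by
  have hδ := delta_pos hp
  have hcoord (i : Fin m) :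
      (outerBox r t i).card ≤ 3 * delta p * (fullSupportBox p r t i).card := by
    rcases eq_or_ne i r with rfl | hi
    · have hinj : Function.Injective fun κ : ℕ => -1 - (delta p : ℤ) * κ := fun a b h => by
        simpa [hδ.ne'] using h
      simp only [outerBox, fullSupportBox, if_pos, Int.card_Icc,
        Finset.card_image_of_injective _ hinj, Finset.card_range]
      have := Nat.lt_mul_div_succ (t - 1) hδ
      rw [mul_assoc]
      generalize delta p * _ = P at this ⊢
      omega
    · simp only [outerBox, fullSupportBox, if_neg hi, Int.card_Icc]
      rw [show ((t : ℤ) + 1 - 0).toNat = t + 1 by omega,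
        show ((t : ℤ) + 1 - 1).toNat = t by omega]
      nlinarith
  simpa using card_piFinset_le_pow_mul _ _ _ hcoord

lemma sparseRatio_cofactorMatrix_le [NeZero d] (hp : ∀ k, (p k).Prime)
    (hinj : Function.Injective p) {k : ℕ} (hk : k < m + d) {t : ℕ} (ht : 1 ≤ t) :
    sparseRatio (cofactorMatrix p r) k t ≤ 1 - 1 / ((3 * delta p) ^ m : ℕ) := by
  refine ncard_div_ncard_le_one_sub (Fintype.piFinset (outerBox r t)).finite_toSet
    (fun b hb => ⟨hb.1, exists_nonneg_solution_of_sigmaFn_le hb.2⟩)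
    (fullSupportBox_subset_feasible hp hinj ht) (feasible_subset_outerBox t) ?_
    ⟨0, by simp, exists_nonneg_solution_cofactorMatrix hp hinj fun _ _ => le_rfl⟩ ?_
  · refine Set.disjoint_left.mpr fun b hbN hbB => ?_
    have := (le_sigmaFn_of_mem_fullSupportBox hp hbB).trans hbN.2
    exact absurd (ENat.natCast_le_natCast.mp this) (not_le.mpr hk)
  · rw [Set.ncard_coe_finset, Set.ncard_coe_finset]
    exact card_outerBox_le hp ht

end CofactorExample

open CofactorExample in
theorem exists_matrix_sigmaAsy_eq_m_add_d (m d : ℕ) (hm : 1 ≤ m) (hd : 1 ≤ d) :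
    ∃ A : Matrix (Fin m) (Fin (m + d)) ℤ,
      A.rank = m ∧
      phiMax A = d ∧
      Filter.Tendsto (sparseRatio A (m + d)) Filter.atTop (nhds 1) ∧
      ¬ Filter.Tendsto (sparseRatio A (m + d - 1)) Filter.atTop (nhds 1) ∧
      sigmaAsy A = m + d := by
  have : NeZero d := ⟨by omega⟩
  set p : Fin d → ℕ := fun k => Nat.nth Nat.Prime k
  have hp (k : Fin d) : (p k).Prime := Nat.prime_nth_prime k
  have hinj : p.Injective :=
    (Nat.nth_injective Nat.infinite_setOfPred_prime).comp Fin.val_injective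
  set A := cofactorMatrix p (⟨0, hm⟩ : Fin m)
  have hfull : Tendsto (sparseRatio A (m + d)) atTop (𝓝 1) :=
    tendsto_const_nhds.congr fun t => (sparseRatio_card_eq_one A t).symm
  have hsparse (k : ℕ) (hk : k < m + d) : ¬ Tendsto (sparseRatio A k) atTop (𝓝 1) := by
    have : 0 < delta p := delta_pos hp
    exact not_tendsto_one_of_eventually_le (sub_lt_self _ (by positivity))
      ((eventually_ge_atTop 1).mono fun t ht => sparseRatio_cofactorMatrix_le hp hinj hk ht)
  exact ⟨A, rank_cofactorMatrix hp hinj, phiMax_cofactorMatrix hp, hfull, hsparse _ (by omega),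
    sigmaAsy_eq_of_tendsto A hfull hsparse⟩
end

section
/- Let v^1, …, v^m ∈ ℤ^m be linearly independent vectors and K := cone({v^1, …, v^m}). For every t ≥ 0 and all x^1, …, x^t ∈ ℤ^m, there exist k_1, …, k_m ∈ ℤ_{≥0} such that the point z := Σ_{i=1}^m k_i v^i satisfies K + z ⊆ K ∩ ⋂_{i=1}^t (K + x^i). -/
/-! Write `z = ∑ kⱼ vʲ` and `xⁱ = ∑ cᵢⱼ vʲ` (possible since the `vʲ` span `ℝ^m`). Choosing
`kⱼ ≥ maxᵢ cᵢⱼ` puts both `z` and every `z - xⁱ` in `K`, and `K + K ⊆ K` gives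
`K + z ⊆ K` and `K + z = K + (z - xⁱ) + xⁱ ⊆ K + xⁱ`. -/

/-- The cone generated by a finite family of integer vectors, as a subset of `ℝ^m`. -/
def coneFam {m k : ℕ} (v : Fin k → (Fin m → ℤ)) : Set (Fin m → ℝ) :=
  {y | ∃ c : Fin k → ℝ, (∀ i, 0 ≤ c i) ∧ y = ∑ i, c i • fun j => (v i j : ℝ)}

section

variable {m n : ℕ} {v : Fin n → Fin m → ℤ}

lemma sum_smul_mem_coneFam {c : Fin n → ℝ} (hc : ∀ i, 0 ≤ c i) :
    ∑ i, c i • (fun j => (v i j : ℝ)) ∈ coneFam v :=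
  ⟨c, hc, rfl⟩

lemma add_mem_coneFam {y z : Fin m → ℝ} (hy : y ∈ coneFam v) (hz : z ∈ coneFam v) :
    y + z ∈ coneFam v := by
  obtain ⟨a, ha, rfl⟩ := hy
  obtain ⟨b, hb, rfl⟩ := hz
  refine ⟨a + b, fun i => add_nonneg (ha i) (hb i), ?_⟩
  simp only [Pi.add_apply, add_smul, Finset.sum_add_distrib]

lemma image_add_coneFam_subset_self {z : Fin m → ℝ} (hz : z ∈ coneFam v) :
    (fun w => w + z) '' coneFam v ⊆ coneFam v := by
  rintro _ ⟨w, hw, rfl⟩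
  exact add_mem_coneFam hw hz

lemma image_add_coneFam_subset {x z : Fin m → ℝ} (hzx : z - x ∈ coneFam v) :
    (fun w => w + z) '' coneFam v ⊆ (fun w => w + x) '' coneFam v := by
  rintro _ ⟨w, hw, rfl⟩
  exact ⟨w + (z - x), add_mem_coneFam hw hzx, by simp only [add_assoc, sub_add_cancel]⟩

lemma sum_smul_sub_sum_smul_mem_coneFam {c k : Fin n → ℝ} (hck : ∀ i, c i ≤ k i) :
    ∑ i, k i • (fun j => (v i j : ℝ)) - ∑ i, c i • (fun j => (v i j : ℝ)) ∈ coneFam v := by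
  simp_rw [← Finset.sum_sub_distrib, ← sub_smul]
  exact sum_smul_mem_coneFam fun i => sub_nonneg.2 (hck i)

lemma exists_nat_sum_smul_sub_mem_coneFam {ι : Type*} [Finite ι]
    (hspan : Submodule.span ℝ (Set.range fun i j => (v i j : ℝ)) = ⊤) (x : ι → Fin m → ℝ) :
    ∃ k : Fin n → ℕ, ∀ i, ∑ j, (k j : ℝ) • (fun l => (v j l : ℝ)) - x i ∈ coneFam v := by
  have hx : ∀ i, ∃ c : Fin n → ℝ, ∑ j, c j • (fun l => (v j l : ℝ)) = x i := fun i =>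
    (Submodule.mem_span_range_iff_exists_fun ℝ).1 (hspan ▸ Submodule.mem_top)
  choose c hc using hx
  obtain ⟨k, hk⟩ := Finite.exists_le fun i j => ⌈c i j⌉₊
  refine ⟨k, fun i => ?_⟩
  rw [← hc i]
  exact sum_smul_sub_sum_smul_mem_coneFam fun j => (Nat.le_ceil _).trans (by exact_mod_cast hk i j)

lemma cast_sum_nat_smul (k : Fin n → ℕ) :
    (fun l => ((∑ j, (k j : ℤ) • v j) l : ℝ)) = ∑ j, (k j : ℝ) • (fun l => (v j l : ℝ)) := by
  ext l
  simp [Finset.sum_apply]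

end

theorem exists_translate_in_intersection {m : ℕ} (v : Fin m → (Fin m → ℤ))
    (hv : LinearIndependent ℝ fun i => fun j => ((v i j : ℝ)))
    (t : ℕ) (x : Fin t → (Fin m → ℤ)) :
    ∃ k : Fin m → ℕ,
      ((fun w => w + fun j => ((∑ i, (k i : ℤ) • v i) j : ℝ)) '' coneFam v) ⊆
        coneFam v ∩ ⋂ i : Fin t, ((fun w => w + fun j => ((x i j : ℝ))) '' coneFam v) := by
  have hspan := hv.span_eq_top_of_card_eq_finrank' (by simp)
  obtain ⟨k, hk⟩ := exists_nat_sum_smul_sub_mem_coneFam hspan fun i j => (x i j : ℝ)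
  refine ⟨k, ?_⟩
  rw [cast_sum_nat_smul]
  exact Set.subset_inter
    (image_add_coneFam_subset_self (sum_smul_mem_coneFam fun j => Nat.cast_nonneg (k j)))
    (Set.subset_iInter fun i => image_add_coneFam_subset (hk i))
end

section
/- Let v^1, …, v^m ∈ ℤ^m be linearly independent vectors and K := cone({v^1, …, v^m}). Then for all x, y ∈ ℤ^m, the set K ∩ (K + x) ∩ (K + y) is nonempty. -/
section coneFam

variable {m k : ℕ} (v : Fin k → (Fin m → ℤ))

theorem add_mem_coneFam_s10 {p q : Fin m → ℝ} (hp : p ∈ coneFam v) (hq : q ∈ coneFam v) :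
    p + q ∈ coneFam v := by
  obtain ⟨c, hc, rfl⟩ := hp
  obtain ⟨d, hd, rfl⟩ := hq
  refine ⟨c + d, fun i => add_nonneg (hc i) (hd i), ?_⟩
  simp only [Pi.add_apply, add_smul, Finset.sum_add_distrib]

theorem exists_mem_coneFam_sub_eq
    (hv : Submodule.span ℝ (Set.range fun i => fun j => (v i j : ℝ)) = ⊤) (z : Fin m → ℝ) :
    ∃ p ∈ coneFam v, ∃ q ∈ coneFam v, p - q = z := by
  obtain ⟨a, rfl⟩ :=
    (Submodule.mem_span_range_iff_exists_fun ℝ).mp (hv ▸ Submodule.mem_top (x := z))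
  refine ⟨_, ⟨fun i => (a i)⁺, fun i => posPart_nonneg _, rfl⟩,
    _, ⟨fun i => (a i)⁻, fun i => negPart_nonneg _, rfl⟩, ?_⟩
  simp only [← Finset.sum_sub_distrib, ← sub_smul, posPart_sub_negPart]

end coneFam

theorem cone_inter_two_translates_nonempty {m : ℕ} (v : Fin m → (Fin m → ℤ))
    (hv : LinearIndependent ℝ fun i => fun j => ((v i j : ℝ)))
    (x y : Fin m → ℤ) :
    (coneFam v ∩ ((fun w => w + fun j => ((x j : ℝ))) '' coneFam v) ∩
      ((fun w => w + fun j => ((y j : ℝ))) '' coneFam v)).Nonempty := by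
  have hspan := hv.span_eq_top_of_card_eq_finrank' (by simp)
  obtain ⟨p, hp, q, hq, hx⟩ := exists_mem_coneFam_sub_eq v hspan fun j => (x j : ℝ)
  obtain ⟨p', hp', q', hq', hy⟩ := exists_mem_coneFam_sub_eq v hspan fun j => (y j : ℝ)
  refine ⟨p + p', ⟨add_mem_coneFam_s10 v hp hp', p' + q, add_mem_coneFam_s10 v hp' hq, ?_⟩,
    p + q', add_mem_coneFam_s10 v hp hq', ?_⟩
  · rw [← hx]; beta_reduce; abel
  · rw [← hy]; beta_reduce; abel
end

section
/- Let d ≥ 1, let p_1 < … < p_d be primes, let δ := p_1⋯p_d and q_i := δ/p_i for each i, and let Ã := (q_1, …, q_d, −δ) ∈ ℤ^{1×(d+1)}. If b ∈ ℤ satisfies b < 0 and b ≡ 1 (mod δ), then P(Ã,b) ≠ ∅ and σ(Ã,b) = 1 + d; that is, b is expressible as a nonnegative integer combination of q_1, …, q_d, −δ, and every such expression uses all d + 1 of these numbers with positive coefficients. -/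
/-!
Modulo `p i` every `q j` with `j ≠ i` vanishes, and so does `δ`; hence a representation
`b = ∑ x j * q j - y * δ` reduces to `b ≡ x i * q i [ZMOD p i]`, and `b ≡ 1` forces `x i ≠ 0`,
while `b < 0` forces `y ≠ 0`. Conversely `q i` is a unit modulo `p i`, so one can choose `x i`
with `x i * q i ≡ b [ZMOD p i]` for every `i`; then `∑ x i * q i ≡ b [ZMOD δ]` because the `p i`
are pairwise coprime, and `y := (∑ x i * q i - b) / δ` is a natural number since `b ≤ 0`.
-/

open Finset Function

section
variable {ι : Type*} [Fintype ι] [DecidableEq ι] {p : ι → ℕ}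

lemma prod_erase_modEq_zero_of_ne {i j : ι} (hij : i ≠ j) :
    ((∏ k ∈ univ.erase j, p k : ℕ) : ℤ) ≡ 0 [ZMOD p i] :=
  Int.modEq_zero_iff_dvd.2 <| Int.natCast_dvd_natCast.2 <|
    dvd_prod_of_mem p (mem_erase.2 ⟨hij, mem_univ i⟩)

lemma sum_mul_prod_erase_modEq (x : ι → ℤ) (i : ι) :
    ∑ j, x j * (∏ k ∈ univ.erase j, p k : ℕ) ≡ x i * (∏ k ∈ univ.erase i, p k : ℕ) [ZMOD p i] :=
  Int.sum_modEq_single (fun h => absurd (mem_univ i) h) fun j _ hji => by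
    simpa using (prod_erase_modEq_zero_of_ne (p := p) (Ne.symm hji)).mul_left (x j)

lemma modEq_mul_prod_erase_of_eq_sum_sub {b : ℤ} {x : ι → ℕ} {y : ℕ}
    (h : b = ∑ i, (x i : ℤ) * (∏ j ∈ univ.erase i, p j : ℕ) - (y : ℤ) * ((∏ i, p i : ℕ) : ℤ))
    (i : ι) : b ≡ x i * (∏ j ∈ univ.erase i, p j : ℕ) [ZMOD p i] := by
  have hδ : ((∏ i, p i : ℕ) : ℤ) ≡ 0 [ZMOD p i] :=
    Int.modEq_zero_iff_dvd.2 <| Int.natCast_dvd_natCast.2 <| dvd_prod_of_mem p (mem_univ i)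
  rw [h]
  simpa using (sum_mul_prod_erase_modEq (fun j => (x j : ℤ)) i).sub (hδ.mul_left y)

lemma ne_zero_of_eq_sum_sub {b : ℤ} {x : ι → ℕ} {y : ℕ}
    (h : b = ∑ i, (x i : ℤ) * (∏ j ∈ univ.erase i, p j : ℕ) - (y : ℤ) * ((∏ i, p i : ℕ) : ℤ))
    {i : ι} (hb : ¬ (p i : ℤ) ∣ b) : x i ≠ 0 := by
  intro hx
  have := modEq_mul_prod_erase_of_eq_sum_sub h i
  rw [hx, Nat.cast_zero, zero_mul] at this
  exact hb (Int.modEq_zero_iff_dvd.1 this)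

variable (hp : Injective p) (hprime : ∀ i, (p i).Prime)
include hp hprime

lemma not_dvd_prod_erase (i : ι) : ¬ p i ∣ ∏ j ∈ univ.erase i, p j := by
  intro h
  obtain ⟨j, hj, hdvd⟩ := (hprime i).prime.exists_mem_finset_dvd h
  exact (mem_erase.1 hj).1 (hp ((Nat.prime_dvd_prime_iff_eq (hprime i) (hprime j)).1 hdvd)).symm

omit [DecidableEq ι] in
lemma prod_dvd_of_forall_dvd {n : ℤ} (h : ∀ i, (p i : ℤ) ∣ n) : ((∏ i, p i : ℕ) : ℤ) ∣ n := by
  push_cast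
  exact Fintype.prod_dvd_of_coprime (fun i j hij => Nat.isCoprime_iff_coprime.2 <|
    (Nat.coprime_primes (hprime i) (hprime j)).2 (hp.ne hij)) h

lemma exists_mul_prod_erase_modEq (b : ℤ) (i : ι) :
    ∃ x : ℕ, (x : ℤ) * (∏ j ∈ univ.erase i, p j : ℕ) ≡ b [ZMOD p i] := by
  have := Fact.mk (hprime i)
  have hq : ((∏ j ∈ univ.erase i, p j : ℕ) : ZMod (p i)) ≠ 0 := by
    rw [Ne, ZMod.natCast_eq_zero_iff]
    exact not_dvd_prod_erase hp hprime i
  refine ⟨((b : ZMod (p i)) * ((∏ j ∈ univ.erase i, p j : ℕ) : ZMod (p i))⁻¹).val, ?_⟩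
  rw [← ZMod.intCast_eq_intCast_iff]
  simp only [Int.cast_mul, Int.cast_natCast, ZMod.natCast_zmod_val, inv_mul_cancel_right₀ hq]

lemma exists_eq_sum_sub_of_nonpos {b : ℤ} (hb : b ≤ 0) :
    ∃ (x : ι → ℕ) (y : ℕ),
      b = ∑ i, (x i : ℤ) * (∏ j ∈ univ.erase i, p j : ℕ) - (y : ℤ) * ((∏ i, p i : ℕ) : ℤ) := by
  choose x hx using exists_mul_prod_erase_modEq hp hprime b
  set S := ∑ i, (x i : ℤ) * (∏ j ∈ univ.erase i, p j : ℕ)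
  obtain ⟨y, hy⟩ : ((∏ i, p i : ℕ) : ℤ) ∣ S - b := prod_dvd_of_forall_dvd hp hprime fun i =>
    ((sum_mul_prod_erase_modEq _ i).trans (hx i)).symm.dvd
  have hδ : (0 : ℤ) < (∏ i, p i : ℕ) := by
    exact_mod_cast prod_pos fun i _ => (hprime i).pos
  have hS : 0 ≤ S := by positivity
  lift y to ℕ using nonneg_of_mul_nonneg_right (by linarith) hδ
  exact ⟨x, y, by linarith⟩

end

theorem negative_rhs_needs_full_support_general (d : ℕ)
    (p : Fin d → ℕ) (hmono : StrictMono p) (hprime : ∀ i, (p i).Prime)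
    (b : ℤ) (hneg : b < 0)
    (hmod : b ≡ 1 [ZMOD ((∏ i, p i : ℕ) : ℤ)]) :
    (∃ (x : Fin d → ℕ) (y : ℕ),
        b = ∑ i, (x i : ℤ) * (∏ j ∈ Finset.univ.erase i, p j : ℕ) -
          (y : ℤ) * ((∏ i, p i : ℕ) : ℤ)) ∧
      ∀ (x : Fin d → ℕ) (y : ℕ),
        b = ∑ i, (x i : ℤ) * (∏ j ∈ Finset.univ.erase i, p j : ℕ) -
          (y : ℤ) * ((∏ i, p i : ℕ) : ℤ) →
        (∀ i, 1 ≤ x i) ∧ 1 ≤ y := by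
  refine ⟨exists_eq_sum_sub_of_nonpos hmono.injective hprime hneg.le,
    fun x y h => ⟨fun i => Nat.one_le_iff_ne_zero.2 (ne_zero_of_eq_sum_sub h ?_),
      Nat.one_le_iff_ne_zero.2 fun hy => hneg.not_ge ?_⟩⟩
  · have hb : b ≡ 1 [ZMOD p i] :=
      hmod.of_dvd (Int.natCast_dvd_natCast.2 (dvd_prod_of_mem p (mem_univ i)))
    rw [hb.dvd_iff]
    exact_mod_cast (hprime i).not_dvd_one
  · rw [h, hy, Nat.cast_zero, zero_mul, sub_zero]
    positivity

theorem negative_rhs_needs_full_support (d : ℕ) (hd : 1 ≤ d)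
    (p : Fin d → ℕ) (hmono : StrictMono p) (hprime : ∀ i, (p i).Prime)
    (b : ℤ) (hneg : b < 0)
    (hmod : b ≡ 1 [ZMOD ((∏ i, p i : ℕ) : ℤ)]) :
    (∃ (x : Fin d → ℕ) (y : ℕ),
        b = ∑ i, (x i : ℤ) * (∏ j ∈ Finset.univ.erase i, p j : ℕ) -
          (y : ℤ) * ((∏ i, p i : ℕ) : ℤ)) ∧
      ∀ (x : Fin d → ℕ) (y : ℕ),
        b = ∑ i, (x i : ℤ) * (∏ j ∈ Finset.univ.erase i, p j : ℕ) -
          (y : ℤ) * ((∏ i, p i : ℕ) : ℤ) →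
        (∀ i, 1 ≤ x i) ∧ 1 ≤ y :=
  negative_rhs_needs_full_support_general d p hmono hprime b hneg hmod
end
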